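/- Let C be a coalgebra over a field k. Then: (a) the Nakayama functor N_C is the zero functor if and only if C*_ℓ^rat = 0; (b) N_C is exact if and only if C*_ℓ^rat is an injective right C-comodule; (c) N_C preserves the full subcategory of finite-dimensional right C-comodules if and only if C*_ℓ^rat is quasi-finite. -/

import Mathlib

/-!
Statement 1.  Let `C` be a coalgebra over a field `k`.  Then:
(a) the Nakayama functor `N_C` is the zero functor iff `C*_ℓ^rat = 0`;
(b) `N_C` is exact iff `C*_ℓ^rat` is an injective right `C`-comodule;
(c) `N_C` preserves the full subcategory of finite-dimensional right `C`-comodules iff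
    `C*_ℓ^rat` is quasi-finite.

Concrete realisations (over the coalgebra `(C, Δ, ε)`):
* right `C`-comodules are vector spaces with a coassociative counital coaction, and the
  left `C*`-action on them is `f ⇀ m = m₍₀₎ ⟨f, m₍₁₎⟩`;
* morphisms of right `C`-comodules are the coaction-compatible linear maps;
* `N_C M = C ⊗_{C*} M`, realised as the quotient of `C ⊗[k] M` by the balancing
  relations, with its induced action on morphisms;
* `N_C` is the zero functor iff every `N_C M` vanishes; `N_C` is exact iff it preserves
  short exact sequences of comodules; `N_C` preserves finite-dimensionality iff
  `N_C M` is finite dimensional whenever `M` is;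
* `C*_ℓ^rat = 0` iff every rational element of `C*` is zero;
* injectivity of the comodule `C*_ℓ^rat` is the extension property along monomorphisms
  of comodules, where (by fullness of comodules in `C*`-modules and maximality of the
  rational part) comodule maps into `C*_ℓ^rat` are exactly the `C*`-linear maps into
  `C*` with rational image;
* quasi-finiteness of `C*_ℓ^rat` means `Hom^C(X, C*_ℓ^rat)` is finite dimensional for
  every finite-dimensional comodule `X`.
-/

open TensorProduct

universe u

namespace Stmt1

variable {k : Type u} [Field k]

section Framework

variable {C : Type u} [AddCommGroup C] [Module k C]

/-- A right comodule structure over the coalgebra `(C, Δ, ε)`. -/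
structure ComodStr (Δ : C →ₗ[k] C ⊗[k] C) (ε : C →ₗ[k] k)
    (M : Type u) [AddCommGroup M] [Module k M] where
  ρ : M →ₗ[k] M ⊗[k] C
  coassoc : (TensorProduct.assoc k M C C).toLinearMap ∘ₗ
      (TensorProduct.map ρ LinearMap.id) ∘ₗ ρ = (TensorProduct.map LinearMap.id Δ) ∘ₗ ρ
  counit : (TensorProduct.rid k M).toLinearMap ∘ₗ
      (TensorProduct.map LinearMap.id ε) ∘ₗ ρ = LinearMap.id

variable (Δ : C →ₗ[k] C ⊗[k] C) (ε : C →ₗ[k] k)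

/-- The convolution product on `C* = (C →ₗ[k] k)`. -/
noncomputable def conv (f g : (C →ₗ[k] k)) : (C →ₗ[k] k) :=
  (TensorProduct.lid k k).toLinearMap ∘ₗ (TensorProduct.map f g) ∘ₗ Δ


theorem conv_add_right (f g₁ g₂ : (C →ₗ[k] k)) :
    conv Δ f (g₁ + g₂) = conv Δ f g₁ + conv Δ f g₂ := by
  simp [conv, TensorProduct.map_add_right, LinearMap.comp_add, LinearMap.add_comp]

theorem conv_smul_right (a : k) (f g : (C →ₗ[k] k)) :
    conv Δ f (a • g) = a • conv Δ f g := by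
  simp [conv, TensorProduct.map_smul_right, LinearMap.comp_smul, LinearMap.smul_comp]

theorem conv_zero_right (f : (C →ₗ[k] k)) : conv Δ f 0 = 0 := by
  have : TensorProduct.map f (0 : (C →ₗ[k] k)) = 0 := by ext x y; simp
  simp [conv, this]

/-- The left action of `C*` on a right `C`-comodule: `f ⇀ m = m₍₀₎ ⟨f, m₍₁₎⟩`. -/
noncomputable def lAct {M : Type u} [AddCommGroup M] [Module k M]
    {ε : C →ₗ[k] k} (s : ComodStr Δ ε M) (f : (C →ₗ[k] k)) : M →ₗ[k] M :=
  (TensorProduct.rid k M).toLinearMap ∘ₗ (TensorProduct.map LinearMap.id f) ∘ₗ s.ρ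

/-- The right action of `C*` on `C` itself: `c ↼ f = ⟨f, c₍₁₎⟩ c₍₂₎`. -/
noncomputable def rAct (f : (C →ₗ[k] k)) : C →ₗ[k] C :=
  (TensorProduct.lid k C).toLinearMap ∘ₗ (TensorProduct.map f LinearMap.id) ∘ₗ Δ

/-- Morphisms of right `C`-comodules. -/
def IsComodHom {M N : Type u} [AddCommGroup M] [Module k M] [AddCommGroup N] [Module k N]
    (s : ComodStr Δ ε M) (t : ComodStr Δ ε N) (φ : M →ₗ[k] N) : Prop :=
  (TensorProduct.map φ LinearMap.id) ∘ₗ s.ρ = t.ρ ∘ₗ φ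

variable {M : Type u} [AddCommGroup M] [Module k M]

/-- The balancing relations defining `C ⊗_{C*} M` inside `C ⊗[k] M`. -/
noncomputable def relators (s : ComodStr Δ ε M) : Submodule k (C ⊗[k] M) :=
  Submodule.span k {x | ∃ (f : (C →ₗ[k] k)) (c : C) (m : M),
    x = (rAct Δ f c) ⊗ₜ[k] m - c ⊗ₜ[k] (lAct Δ s f m)}

/-- The Nakayama functor on objects: `N_C M = C ⊗_{C*} M`. -/
noncomputable def Nak (s : ComodStr Δ ε M) : Type u :=
  (C ⊗[k] M) ⧸ relators Δ ε s

noncomputable instance (s : ComodStr Δ ε M) : AddCommGroup (Nak Δ ε s) :=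
  inferInstanceAs (AddCommGroup ((C ⊗[k] M) ⧸ relators Δ ε s))

noncomputable instance (s : ComodStr Δ ε M) : Module k (Nak Δ ε s) :=
  inferInstanceAs (Module k ((C ⊗[k] M) ⧸ relators Δ ε s))

/-- A comodule morphism is `C*`-equivariant. -/
theorem equivariant_of_isComodHom
    {N : Type u} [AddCommGroup N] [Module k N]
    {s : ComodStr Δ ε M} {t : ComodStr Δ ε N} {φ : M →ₗ[k] N}
    (hφ : IsComodHom Δ ε s t φ) (f : (C →ₗ[k] k)) (m : M) :
    φ (lAct Δ s f m) = lAct Δ t f (φ m) := by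
  have h1 : ((TensorProduct.rid k N).toLinearMap ∘ₗ (TensorProduct.map LinearMap.id f)) ∘ₗ
      (TensorProduct.map φ (LinearMap.id (M := C))) =
      φ ∘ₗ ((TensorProduct.rid k M).toLinearMap ∘ₗ (TensorProduct.map LinearMap.id f)) := by
    apply TensorProduct.ext'
    intro x c
    simp
  have h2 := congrArg (fun (g : M →ₗ[k] N ⊗[k] C) =>
      ((TensorProduct.rid k N).toLinearMap ∘ₗ (TensorProduct.map LinearMap.id f)) ∘ₗ g) hφ
  simp only [← LinearMap.comp_assoc] at h2
  rw [h1] at h2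
  have := congrArg (fun g : M →ₗ[k] N => g m) h2
  simpa [lAct, LinearMap.comp_assoc] using this

/-- The map induced by a comodule morphism on Nakayama functors. -/
noncomputable def nakMap {N : Type u} [AddCommGroup N] [Module k N]
    {s : ComodStr Δ ε M} {t : ComodStr Δ ε N} (φ : M →ₗ[k] N)
    (hφ : IsComodHom Δ ε s t φ) : Nak Δ ε s →ₗ[k] Nak Δ ε t :=
  Submodule.mapQ (relators Δ ε s) (relators Δ ε t)
    (TensorProduct.map LinearMap.id φ)
    (by
      rw [relators, Submodule.span_le]
      rintro x ⟨f, c, m, rfl⟩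
      have : (TensorProduct.map (LinearMap.id (M := C)) φ)
          ((rAct Δ f c) ⊗ₜ[k] m - c ⊗ₜ[k] (lAct Δ s f m)) =
          (rAct Δ f c) ⊗ₜ[k] (φ m) - c ⊗ₜ[k] (lAct Δ t f (φ m)) := by
        simp [map_sub, equivariant_of_isComodHom Δ ε hφ f m]
      simp only [SetLike.mem_coe, Submodule.mem_comap, this]
      exact Submodule.subset_span ⟨f, c, φ m, rfl⟩)

/-- Rational elements of `C*` (for the left regular `C*`-module structure). -/
def IsRational (f : (C →ₗ[k] k)) : Prop :=
  ∃ (n : ℕ) (g : Fin n → (C →ₗ[k] k)) (c : Fin n → C),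
    ∀ h : (C →ₗ[k] k), conv Δ h f = ∑ i, h (c i) • g i


/-- `Hom^C(M, C*_ℓ^rat)`: comodule maps from `M` to the rational part of `C*`,
realised as left `C*`-module maps `M → C*` with rational image. -/
noncomputable def RatHom {M : Type u} [AddCommGroup M] [Module k M]
    (s : ComodStr Δ ε M) : Submodule k (M →ₗ[k] (C →ₗ[k] k)) where
  carrier := {φ | (∀ (f : (C →ₗ[k] k)) (m : M), φ (lAct Δ s f m) = conv Δ f (φ m)) ∧
      ∀ m : M, IsRational Δ (φ m)}
  add_mem' := by
    rintro φ ψ ⟨hφ, hφr⟩ ⟨hψ, hψr⟩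
    refine ⟨fun f m => by simp only [LinearMap.add_apply, hφ f m, hψ f m, conv_add_right],
      fun m => ?_⟩
    obtain ⟨n₁, g₁, c₁, h₁⟩ := hφr m
    obtain ⟨n₂, g₂, c₂, h₂⟩ := hψr m
    refine ⟨n₁ + n₂, Fin.append g₁ g₂, Fin.append c₁ c₂, fun h => ?_⟩
    rw [LinearMap.add_apply, conv_add_right, h₁ h, h₂ h, Fin.sum_univ_add]
    simp [Fin.append_left, Fin.append_right]
  zero_mem' := by
    refine ⟨fun f m => by simp [conv_zero_right], fun m => ?_⟩
    exact ⟨0, ![], ![], fun h => by simp [conv_zero_right]⟩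
  smul_mem' := by
    rintro a φ ⟨hφ, hφr⟩
    refine ⟨fun f m => by simp only [LinearMap.smul_apply, hφ f m, conv_smul_right], fun m => ?_⟩
    obtain ⟨n, g, c, hg⟩ := hφr m
    refine ⟨n, fun i => a • g i, c, fun h' => ?_⟩
    rw [LinearMap.smul_apply, conv_smul_right, hg h', Finset.smul_sum]
    refine Finset.sum_congr rfl fun i _ => ?_
    rw [smul_comm]

/-- `N_C` is the zero functor. -/
def NakayamaZero : Prop :=
  ∀ (M : Type u) [AddCommGroup M] [Module k M] (s : ComodStr Δ ε M)
    (x : Nak Δ ε s), x = 0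

/-- `N_C` is an exact functor: it preserves short exact sequences of comodules. -/
def NakayamaExact : Prop :=
  ∀ (M₁ M₂ M₃ : Type u) [AddCommGroup M₁] [Module k M₁] [AddCommGroup M₂] [Module k M₂]
    [AddCommGroup M₃] [Module k M₃]
    (s₁ : ComodStr Δ ε M₁) (s₂ : ComodStr Δ ε M₂) (s₃ : ComodStr Δ ε M₃)
    (φ : M₁ →ₗ[k] M₂) (ψ : M₂ →ₗ[k] M₃)
    (hφ : IsComodHom Δ ε s₁ s₂ φ) (hψ : IsComodHom Δ ε s₂ s₃ ψ),
    Function.Injective φ → Function.Surjective ψ → Function.Exact φ ψ →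
      Function.Injective (nakMap Δ ε φ hφ) ∧ Function.Surjective (nakMap Δ ε ψ hψ) ∧
        Function.Exact (nakMap Δ ε φ hφ) (nakMap Δ ε ψ hψ)

/-- `N_C` preserves the subcategory of finite-dimensional comodules. -/
def NakayamaPreservesFd : Prop :=
  ∀ (M : Type u) [AddCommGroup M] [Module k M] (s : ComodStr Δ ε M),
    FiniteDimensional k M → FiniteDimensional k (Nak Δ ε s)

/-- `C*_ℓ^rat = 0`. -/
def RatPartZero : Prop :=
  ∀ f : (C →ₗ[k] k), IsRational Δ f → f = 0

/-- `C*_ℓ^rat` is an injective right `C`-comodule: every comodule map `X → C*_ℓ^rat`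
extends along every monomorphism `X → Y` of right `C`-comodules.  (Comodule maps into
`C*_ℓ^rat` are exactly the `C*`-linear maps into `C*` with rational image.) -/
def RatPartInjective : Prop :=
  ∀ (X Y : Type u) [AddCommGroup X] [Module k X] [AddCommGroup Y] [Module k Y]
    (sX : ComodStr Δ ε X) (sY : ComodStr Δ ε Y) (i : X →ₗ[k] Y),
    IsComodHom Δ ε sX sY i → Function.Injective i →
    ∀ α : X →ₗ[k] (C →ₗ[k] k),
      (∀ (f : (C →ₗ[k] k)) (x : X), α (lAct Δ sX f x) = conv Δ f (α x)) →
      (∀ x : X, IsRational Δ (α x)) →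
      ∃ β : Y →ₗ[k] (C →ₗ[k] k),
        (∀ (f : (C →ₗ[k] k)) (y : Y), β (lAct Δ sY f y) = conv Δ f (β y)) ∧
        (∀ y : Y, IsRational Δ (β y)) ∧ β ∘ₗ i = α

/-- `C*_ℓ^rat` is quasi-finite: `Hom^C(X, C*_ℓ^rat)` is finite dimensional for every
finite-dimensional right `C`-comodule `X`. -/
def RatPartQuasiFinite : Prop :=
  ∀ (X : Type u) [AddCommGroup X] [Module k X], FiniteDimensional k X →
    ∀ (sX : ComodStr Δ ε X),
    @FiniteDimensional k (RatHom Δ ε sX) _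
      (Submodule.addCommGroup (R := k) (M := X →ₗ[k] (C →ₗ[k] k)) _) _

end Framework

/-!
For a right comodule `M`, a functional on `C ⊗_{C*} M` is the same as a map `α : M → C*` with
`α (f ⇀ m) (c) = α m (c ↼ f)`, i.e. a `C*`-linear map `M → C*`; its values are automatically
rational, because `f ⇀ m` is a contraction of the finite tensor `ρ m`. Hence
`(N_C M)* ≅ Hom^C(M, C*_ℓ^rat)`, naturally in `M`. Dualising vector spaces reflects vanishing,
finite dimension, injectivity, surjectivity and exactness, so each property of `N_C` becomes the
matching property of `Hom^C(-, C*_ℓ^rat)`. For (a) one tests on `M = C*_ℓ^rat` itself, which is a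
comodule because the left translates of a rational functional are contractions of a tensor;
for (b) one tests injectivity on the sequences `X → Y → Y ⧸ X`.
-/

section Contraction

variable {M N V W : Type*} [AddCommMonoid M] [Module k M] [AddCommMonoid N] [Module k N]
  [AddCommMonoid V] [Module k V] [AddCommMonoid W] [Module k W]

noncomputable def contractRight (h : W →ₗ[k] k) : M ⊗[k] W →ₗ[k] M :=
  (TensorProduct.rid k M).toLinearMap ∘ₗ TensorProduct.map LinearMap.id h

@[simp]
theorem contractRight_tmul (h : W →ₗ[k] k) (m : M) (w : W) :
    contractRight h (m ⊗ₜ[k] w) = h w • m := by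
  simp [contractRight]

theorem contractRight_rTensor (h : W →ₗ[k] k) (φ : M →ₗ[k] N) (x : M ⊗[k] W) :
    contractRight h (φ.rTensor W x) = φ (contractRight h x) := by
  induction x using TensorProduct.induction_on with
  | zero => simp
  | tmul m w => simp
  | add x y hx hy => simp [hx, hy]

theorem contractRight_lTensor (h : W →ₗ[k] k) (g : V →ₗ[k] W) (x : M ⊗[k] V) :
    contractRight h (g.lTensor M x) = contractRight (h ∘ₗ g) x := by
  induction x using TensorProduct.induction_on with
  | zero => simp
  | tmul m v => simp
  | add x y hx hy => simp [hx, hy]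

end Contraction

section Separation

variable {M W : Type*} [AddCommGroup M] [Module k M] [AddCommGroup W] [Module k W]

theorem exists_fin_sum_tmul (x : M ⊗[k] W) :
    ∃ (n : ℕ) (m : Fin n → M) (w : Fin n → W), x = ∑ i, m i ⊗ₜ[k] w i := by
  obtain ⟨S, rfl⟩ := TensorProduct.exists_finset x
  refine ⟨S.card, fun i => (S.equivFin.symm i).1.1, fun i => (S.equivFin.symm i).1.2, ?_⟩
  rw [← Finset.sum_coe_sort S, ← S.equivFin.symm.sum_comp]

theorem eq_of_forall_contractRight_eq {x y : M ⊗[k] W}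
    (h : ∀ f : W →ₗ[k] k, contractRight f x = contractRight f y) : x = y := by
  classical
  let b := Module.Basis.ofVectorSpace k W
  have coord : ∀ (z : M ⊗[k] W) i,
      TensorProduct.equivFinsuppOfBasisRight b z i = contractRight (b.coord i) z := by
    intro z i
    induction z using TensorProduct.induction_on with
    | zero => simp
    | tmul m w => simp
    | add z z' hz hz' => simp [hz, hz']
  apply (TensorProduct.equivFinsuppOfBasisRight b).injective
  ext i
  rw [coord, coord, h]

theorem mem_range_rTensor_subtype_of_forall_contractRight_mem (P : Submodule k M)
    {x : M ⊗[k] W} (hx : ∀ f : W →ₗ[k] k, contractRight f x ∈ P) :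
    x ∈ LinearMap.range (P.subtype.rTensor W) := by
  rw [← rTensor_mkQ, LinearMap.mem_ker]
  refine eq_of_forall_contractRight_eq fun f => ?_
  rw [contractRight_rTensor, map_zero, Submodule.mkQ_apply, Submodule.Quotient.mk_eq_zero]
  exact hx f

noncomputable def contractRightHom : M ⊗[k] W →ₗ[k] (W →ₗ[k] k) →ₗ[k] M :=
  (LinearMap.mk₂ k (fun h x => contractRight h x)
    (fun h h' x => by simp [contractRight, TensorProduct.map_add_right])
    (fun a h x => by simp [contractRight, TensorProduct.map_smul_right])
    (fun h x y => map_add _ x y) (fun a h x => map_smul _ a x)).flip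

theorem contractRightHom_injective :
    Function.Injective (contractRightHom (k := k) (M := M) (W := W)) :=
  fun _ _ hxy => eq_of_forall_contractRight_eq fun f => LinearMap.congr_fun hxy f

noncomputable def coactionOfRational (F : M →ₗ[k] (W →ₗ[k] k) →ₗ[k] M)
    (hF : ∀ m, F m ∈ LinearMap.range contractRightHom) : M →ₗ[k] M ⊗[k] W :=
  (LinearEquiv.ofInjective _ contractRightHom_injective).symm.toLinearMap ∘ₗ
    LinearMap.codRestrict _ F hF

theorem contractRight_coactionOfRational (F : M →ₗ[k] (W →ₗ[k] k) →ₗ[k] M)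
    (hF : ∀ m, F m ∈ LinearMap.range contractRightHom) (h : W →ₗ[k] k) (m : M) :
    contractRight h (coactionOfRational F hF m) = F m h := by
  have := (LinearEquiv.ofInjective _ contractRightHom_injective).apply_symm_apply
    (LinearMap.codRestrict _ F hF m)
  exact LinearMap.congr_fun (congrArg Subtype.val this) h

end Separation

section Coaction

variable {C : Type u} [AddCommGroup C] [Module k C] (Δ : C →ₗ[k] C ⊗[k] C) (ε : C →ₗ[k] k)
variable {M N : Type u} [AddCommGroup M] [Module k M] [AddCommGroup N] [Module k N]

theorem conv_add_left (f₁ f₂ g : C →ₗ[k] k) :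
    conv Δ (f₁ + f₂) g = conv Δ f₁ g + conv Δ f₂ g := by
  simp [conv, TensorProduct.map_add_left, LinearMap.comp_add, LinearMap.add_comp]

theorem conv_smul_left (a : k) (f g : C →ₗ[k] k) :
    conv Δ (a • f) g = a • conv Δ f g := by
  simp [conv, TensorProduct.map_smul_left, LinearMap.comp_smul, LinearMap.smul_comp]

theorem conv_apply_eq_apply_rAct (h g : C →ₗ[k] k) (c : C) :
    conv Δ h g c = g (rAct Δ h c) := by
  simp only [conv, rAct, LinearMap.comp_apply, LinearEquiv.coe_coe]
  induction Δ c using TensorProduct.induction_on with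
  | zero => simp
  | tmul x y => simp
  | add x y hx hy => simp only [map_add, hx, hy]

theorem conv_eq_comp_contractRight (h g : C →ₗ[k] k) :
    conv Δ h g = h ∘ₗ contractRight g ∘ₗ Δ := by
  ext c
  simp only [conv, LinearMap.comp_apply, LinearEquiv.coe_coe]
  induction Δ c using TensorProduct.induction_on with
  | zero => simp
  | tmul x y => simp [mul_comm]
  | add x y hx hy => simp only [map_add, hx, hy]

theorem contractRight_contractRight_assoc_symm (a b : C →ₗ[k] k) (x : M ⊗[k] C) :
    contractRight a (contractRight b ((TensorProduct.assoc k M C C).symm (Δ.lTensor M x))) =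
      contractRight (conv Δ a b) x := by
  have key : ∀ y : M ⊗[k] (C ⊗[k] C),
      contractRight a (contractRight b ((TensorProduct.assoc k M C C).symm y)) =
        contractRight ((TensorProduct.lid k k).toLinearMap ∘ₗ TensorProduct.map a b) y := by
    intro y
    induction y using TensorProduct.induction_on with
    | zero => simp
    | tmul m z =>
      induction z using TensorProduct.induction_on with
      | zero => simp
      | tmul c c' => simp [smul_smul, mul_comm]
      | add z z' hz hz' => simp_all [TensorProduct.tmul_add]
    | add y y' hy hy' => simp [hy, hy']
  rw [key, contractRight_lTensor]
  rfl

theorem coassoc_iff (ρ : M →ₗ[k] M ⊗[k] C) :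
    (TensorProduct.assoc k M C C).toLinearMap ∘ₗ (TensorProduct.map ρ LinearMap.id) ∘ₗ ρ =
        (TensorProduct.map LinearMap.id Δ) ∘ₗ ρ ↔
      ∀ (a b : C →ₗ[k] k) (m : M),
        contractRight a (ρ (contractRight b (ρ m))) = contractRight (conv Δ a b) (ρ m) := by
  have hρ : ∀ a b m, contractRight a (contractRight b (ρ.rTensor C (ρ m))) =
      contractRight a (ρ (contractRight b (ρ m))) := fun a b m => by
    rw [contractRight_rTensor]
  simp only [LinearMap.ext_iff, LinearMap.comp_apply, LinearEquiv.coe_coe,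
    ← LinearEquiv.eq_symm_apply]
  constructor
  · intro H a b m
    rw [← hρ, ← contractRight_contractRight_assoc_symm]
    exact congrArg (fun y => contractRight a (contractRight b y)) (H m)
  · intro H m
    refine eq_of_forall_contractRight_eq fun b => eq_of_forall_contractRight_eq fun a => ?_
    exact (hρ a b m).trans ((H a b m).trans (contractRight_contractRight_assoc_symm Δ a b _).symm)

theorem lAct_counit (s : ComodStr Δ ε M) (m : M) : lAct Δ s ε m = m :=
  LinearMap.congr_fun s.counit m

theorem lAct_lAct (s : ComodStr Δ ε M) (a b : C →ₗ[k] k) (m : M) :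
    lAct Δ s a (lAct Δ s b m) = lAct Δ s (conv Δ a b) m :=
  (coassoc_iff Δ s.ρ).1 s.coassoc a b m

def ComodStr.ofAction (ρ : M →ₗ[k] M ⊗[k] C) (one : ∀ m, contractRight ε (ρ m) = m)
    (mul : ∀ (a b : C →ₗ[k] k) (m : M),
      contractRight a (ρ (contractRight b (ρ m))) = contractRight (conv Δ a b) (ρ m)) :
    ComodStr Δ ε M where
  ρ := ρ
  coassoc := (coassoc_iff Δ ρ).2 mul
  counit := LinearMap.ext one

/-- The hypothesis `hP` says that `P` is a subcomodule. -/
noncomputable def ComodStr.quotient (s : ComodStr Δ ε N) (P : Submodule k N)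
    (hP : P ≤ LinearMap.ker (P.mkQ.rTensor C ∘ₗ s.ρ)) : ComodStr Δ ε (N ⧸ P) :=
  ComodStr.ofAction Δ ε (P.liftQ (P.mkQ.rTensor C ∘ₗ s.ρ) hP)
    (fun m => by
      induction m using Submodule.Quotient.induction_on with
      | H y =>
        simp only [Submodule.liftQ_apply, LinearMap.comp_apply, contractRight_rTensor]
        exact congrArg P.mkQ (lAct_counit Δ ε s y))
    (fun a b m => by
      induction m using Submodule.Quotient.induction_on with
      | H y =>
        simp only [Submodule.liftQ_apply, LinearMap.comp_apply, contractRight_rTensor,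
          Submodule.mkQ_apply]
        exact congrArg P.mkQ (lAct_lAct Δ ε s a b y))

theorem isComodHom_mkQ (s : ComodStr Δ ε N) (P : Submodule k N)
    (hP : P ≤ LinearMap.ker (P.mkQ.rTensor C ∘ₗ s.ρ)) :
    IsComodHom Δ ε s (s.quotient Δ ε P hP) P.mkQ :=
  rfl

theorem range_le_ker_rTensor_mkQ_comp {s : ComodStr Δ ε M} {t : ComodStr Δ ε N}
    {φ : M →ₗ[k] N} (hφ : IsComodHom Δ ε s t φ) :
    LinearMap.range φ ≤ LinearMap.ker ((LinearMap.range φ).mkQ.rTensor C ∘ₗ t.ρ) := by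
  rintro _ ⟨m, rfl⟩
  rw [LinearMap.mem_ker, LinearMap.comp_apply, ← LinearMap.comp_apply t.ρ, ← hφ,
    LinearMap.comp_apply, ← LinearMap.rTensor_def, ← LinearMap.rTensor_comp_apply,
    LinearMap.range_mkQ_comp, LinearMap.rTensor_zero, LinearMap.zero_apply]

end Coaction

section RationalPart

variable {C : Type u} [AddCommGroup C] [Module k C] (Δ : C →ₗ[k] C ⊗[k] C) (ε : C →ₗ[k] k)
variable {M : Type u} [AddCommGroup M] [Module k M]

theorem isRational_iff (f : C →ₗ[k] k) :
    IsRational Δ f ↔ ∃ x : (C →ₗ[k] k) ⊗[k] C, ∀ h, contractRight h x = conv Δ h f := by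
  constructor
  · rintro ⟨n, g, c, hf⟩
    exact ⟨∑ i, g i ⊗ₜ[k] c i, fun h => by simp [hf]⟩
  · rintro ⟨x, hx⟩
    obtain ⟨n, g, c, rfl⟩ := exists_fin_sum_tmul x
    exact ⟨n, g, c, fun h => by simp [← hx]⟩

theorem isRational_of_equivariant (s : ComodStr Δ ε M) (α : M →ₗ[k] (C →ₗ[k] k))
    (hα : ∀ (f : C →ₗ[k] k) (m : M), α (lAct Δ s f m) = conv Δ f (α m)) (m : M) :
    IsRational Δ (α m) :=
  (isRational_iff Δ _).2 ⟨α.rTensor C (s.ρ m), fun h => by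
    rw [contractRight_rTensor, ← hα]
    rfl⟩

theorem mem_ratHom_iff (s : ComodStr Δ ε M) (α : M →ₗ[k] (C →ₗ[k] k)) :
    α ∈ RatHom Δ ε s ↔ ∀ (f : C →ₗ[k] k) (m : M), α (lAct Δ s f m) = conv Δ f (α m) :=
  ⟨And.left, fun hα => ⟨hα, isRational_of_equivariant Δ ε s α hα⟩⟩

noncomputable def ratPart : Submodule k (C →ₗ[k] k) where
  carrier := {f | IsRational Δ f}
  add_mem' := by
    simp only [Set.mem_ofPred_eq, isRational_iff]
    rintro f g ⟨x, hx⟩ ⟨y, hy⟩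
    exact ⟨x + y, fun h => by rw [map_add, hx, hy, conv_add_right]⟩
  zero_mem' := (isRational_iff Δ 0).2 ⟨0, fun h => by rw [map_zero, conv_zero_right]⟩
  smul_mem' := by
    simp only [Set.mem_ofPred_eq, isRational_iff]
    rintro a f ⟨x, hx⟩
    exact ⟨a • x, fun h => by rw [map_smul, hx, conv_smul_right]⟩

end RationalPart

section Duality

variable {C : Type u} [AddCommGroup C] [Module k C] (Δ : C →ₗ[k] C ⊗[k] C) (ε : C →ₗ[k] k)
variable {M N P : Type u} [AddCommGroup M] [Module k M] [AddCommGroup N] [Module k N]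
  [AddCommGroup P] [Module k P]

theorem exact_dualMap_iff {V₁ V₂ V₃ : Type*} [AddCommGroup V₁] [Module k V₁]
    [AddCommGroup V₂] [Module k V₂] [AddCommGroup V₃] [Module k V₃]
    (u : V₁ →ₗ[k] V₂) (v : V₂ →ₗ[k] V₃) :
    Function.Exact v.dualMap u.dualMap ↔ Function.Exact u v := by
  rw [LinearMap.exact_iff, LinearMap.exact_iff,
    LinearMap.ker_dualMap_eq_dualAnnihilator_range,
    LinearMap.range_dualMap_eq_dualAnnihilator_ker]
  constructor
  · intro h
    simpa only [Subspace.dualAnnihilator_dualCoannihilator_eq] using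
      congrArg Submodule.dualCoannihilator h.symm
  · intro h
    rw [h]

noncomputable def dualTensorEquiv : Module.Dual k (C ⊗[k] M) ≃ₗ[k] (M →ₗ[k] C →ₗ[k] k) :=
  (TensorProduct.lift.equiv (RingHom.id k) C M k).symm ≪≫ₗ LinearMap.lflip

theorem dualTensorEquiv_symm_apply_tmul (α : M →ₗ[k] C →ₗ[k] k) (c : C) (m : M) :
    dualTensorEquiv.symm α (c ⊗ₜ[k] m) = α m c :=
  rfl

theorem map_dualAnnihilator_relators (s : ComodStr Δ ε M) :
    (relators Δ ε s).dualAnnihilator.map (dualTensorEquiv (C := C)).toLinearMap =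
      RatHom Δ ε s := by
  ext α
  have generator : ∀ f c m,
      dualTensorEquiv.symm α (rAct Δ f c ⊗ₜ[k] m - c ⊗ₜ[k] lAct Δ s f m) =
        conv Δ f (α m) c - α (lAct Δ s f m) c := fun f c m => by
    rw [map_sub, dualTensorEquiv_symm_apply_tmul, dualTensorEquiv_symm_apply_tmul,
      conv_apply_eq_apply_rAct]
  rw [Submodule.map_equiv_eq_comap_symm, Submodule.mem_comap, mem_ratHom_iff,
    Submodule.mem_dualAnnihilator]
  constructor
  · intro H f m
    ext c
    have := H _ (Submodule.subset_span ⟨f, c, m, rfl⟩)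
    rwa [LinearEquiv.coe_coe, generator, sub_eq_zero, eq_comm] at this
  · intro H w hw
    refine (show relators Δ ε s ≤ LinearMap.ker _ from ?_) hw
    rw [relators, Submodule.span_le]
    rintro _ ⟨f, c, m, rfl⟩
    rw [SetLike.mem_coe, LinearMap.mem_ker, LinearEquiv.coe_coe, generator, H, sub_self]

noncomputable def dualNakEquiv (s : ComodStr Δ ε M) :
    Module.Dual k (Nak Δ ε s) ≃ₗ[k] RatHom Δ ε s :=
  (relators Δ ε s).dualQuotEquivDualAnnihilator ≪≫ₗ
    dualTensorEquiv.ofSubmodules _ _ (map_dualAnnihilator_relators Δ ε s)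

noncomputable def ratHomPrecomp {s : ComodStr Δ ε M} {t : ComodStr Δ ε N} {φ : M →ₗ[k] N}
    (hφ : IsComodHom Δ ε s t φ) : RatHom Δ ε t →ₗ[k] RatHom Δ ε s :=
  (LinearMap.lcomp k (C →ₗ[k] k) φ).restrict fun α hα => by
    rw [mem_ratHom_iff] at hα ⊢
    intro f m
    simp only [LinearMap.lcomp_apply, equivariant_of_isComodHom Δ ε hφ, hα]

theorem ratHomPrecomp_comp_dualNakEquiv {s : ComodStr Δ ε M} {t : ComodStr Δ ε N}
    {φ : M →ₗ[k] N} (hφ : IsComodHom Δ ε s t φ) :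
    ratHomPrecomp Δ ε hφ ∘ₗ (dualNakEquiv Δ ε t).toLinearMap =
      (dualNakEquiv Δ ε s).toLinearMap ∘ₗ (nakMap Δ ε φ hφ).dualMap :=
  rfl

theorem subsingleton_nak_iff (s : ComodStr Δ ε M) :
    Subsingleton (Nak Δ ε s) ↔ Subsingleton (RatHom Δ ε s) := by
  rw [← Module.subsingleton_dual_iff k, (dualNakEquiv Δ ε s).toEquiv.subsingleton_congr]

theorem finite_nak_iff (s : ComodStr Δ ε M) :
    Module.Finite k (Nak Δ ε s) ↔ Module.Finite k (RatHom Δ ε s) := by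
  rw [← Module.finite_dual_iff k, Module.Finite.equiv_iff (dualNakEquiv Δ ε s)]

theorem injective_nakMap_iff {s : ComodStr Δ ε M} {t : ComodStr Δ ε N} {φ : M →ₗ[k] N}
    (hφ : IsComodHom Δ ε s t φ) :
    Function.Injective (nakMap Δ ε φ hφ) ↔ Function.Surjective (ratHomPrecomp Δ ε hφ) := by
  have square := congrArg DFunLike.coe (ratHomPrecomp_comp_dualNakEquiv Δ ε hφ)
  simp only [LinearMap.coe_comp, LinearEquiv.coe_coe] at square
  rw [← LinearMap.dualMap_surjective_iff, ← EquivLike.comp_surjective _ (dualNakEquiv Δ ε s),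
    ← square, EquivLike.surjective_comp]

theorem surjective_nakMap_iff {s : ComodStr Δ ε M} {t : ComodStr Δ ε N} {φ : M →ₗ[k] N}
    (hφ : IsComodHom Δ ε s t φ) :
    Function.Surjective (nakMap Δ ε φ hφ) ↔ Function.Injective (ratHomPrecomp Δ ε hφ) := by
  have square := congrArg DFunLike.coe (ratHomPrecomp_comp_dualNakEquiv Δ ε hφ)
  simp only [LinearMap.coe_comp, LinearEquiv.coe_coe] at square
  rw [← LinearMap.dualMap_injective_iff, ← EquivLike.comp_injective _ (dualNakEquiv Δ ε s),
    ← square, EquivLike.injective_comp]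

theorem exact_nakMap_iff {s₁ : ComodStr Δ ε M} {s₂ : ComodStr Δ ε N} {s₃ : ComodStr Δ ε P}
    {φ : M →ₗ[k] N} {ψ : N →ₗ[k] P} (hφ : IsComodHom Δ ε s₁ s₂ φ)
    (hψ : IsComodHom Δ ε s₂ s₃ ψ) :
    Function.Exact (nakMap Δ ε φ hφ) (nakMap Δ ε ψ hψ) ↔
      Function.Exact (ratHomPrecomp Δ ε hψ) (ratHomPrecomp Δ ε hφ) := by
  rw [← exact_dualMap_iff]
  exact (Function.Exact.iff_of_ladder_linearEquiv (ratHomPrecomp_comp_dualNakEquiv Δ ε hψ)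
    (ratHomPrecomp_comp_dualNakEquiv Δ ε hφ)).symm

theorem ratHomPrecomp_injective {s : ComodStr Δ ε M} {t : ComodStr Δ ε N} {ψ : M →ₗ[k] N}
    (hψ : IsComodHom Δ ε s t ψ) (hsurj : Function.Surjective ψ) :
    Function.Injective (ratHomPrecomp Δ ε hψ) := fun _ _ h =>
  Subtype.ext (LinearMap.lcomp_injective_of_surjective ψ hsurj (congrArg Subtype.val h))

theorem mem_ratHom_of_comp_mem {s : ComodStr Δ ε M} {t : ComodStr Δ ε N} {ψ : M →ₗ[k] N}
    (hψ : IsComodHom Δ ε s t ψ) (hsurj : Function.Surjective ψ) {β : N →ₗ[k] C →ₗ[k] k}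
    (hβ : β ∘ₗ ψ ∈ RatHom Δ ε s) : β ∈ RatHom Δ ε t := by
  rw [mem_ratHom_iff] at hβ ⊢
  intro f n
  obtain ⟨m, rfl⟩ := hsurj n
  rw [← equivariant_of_isComodHom Δ ε hψ]
  exact hβ f m

theorem exact_ratHomPrecomp {s₁ : ComodStr Δ ε M} {s₂ : ComodStr Δ ε N} {s₃ : ComodStr Δ ε P}
    {φ : M →ₗ[k] N} {ψ : N →ₗ[k] P} (hφ : IsComodHom Δ ε s₁ s₂ φ)
    (hψ : IsComodHom Δ ε s₂ s₃ ψ) (hexact : Function.Exact φ ψ)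
    (hsurj : Function.Surjective ψ) :
    Function.Exact (ratHomPrecomp Δ ε hψ) (ratHomPrecomp Δ ε hφ) := by
  intro α
  have hom_exact := LinearMap.exact_lcomp_of_exact_of_surjective (C →ₗ[k] k) hexact hsurj α
  constructor
  · intro hα
    obtain ⟨β, hβ⟩ := hom_exact.1 (congrArg Subtype.val hα)
    have hβψ : β ∘ₗ ψ ∈ RatHom Δ ε s₂ := by
      rw [← LinearMap.lcomp_apply' (S := k), hβ]
      exact α.2
    exact ⟨⟨β, mem_ratHom_of_comp_mem Δ ε hψ hsurj hβψ⟩, Subtype.ext hβ⟩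
  · rintro ⟨β, rfl⟩
    exact Subtype.ext (hom_exact.2 ⟨β, rfl⟩)

end Duality

section Main

variable {C : Type u} [AddCommGroup C] [Module k C] (Δ : C →ₗ[k] C ⊗[k] C) (ε : C →ₗ[k] k)

theorem nakayamaExact_iff_ratPartInjective :
    NakayamaExact Δ ε ↔ RatPartInjective Δ ε := by
  constructor
  · intro H X Y _ _ _ _ sX sY i hi hinj α hα hαrat
    have hP := range_le_ker_rTensor_mkQ_comp Δ ε hi
    obtain ⟨hnak, -, -⟩ := H X Y _ sX sY (sY.quotient Δ ε _ hP) i _ hi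
      (isComodHom_mkQ Δ ε sY _ hP) hinj (Submodule.mkQ_surjective _)
      (LinearMap.exact_iff.2 (Submodule.ker_mkQ _))
    obtain ⟨β, hβ⟩ := (injective_nakMap_iff Δ ε hi).1 hnak ⟨α, hα, hαrat⟩
    exact ⟨β, β.2.1, β.2.2, congrArg Subtype.val hβ⟩
  · intro H M₁ M₂ M₃ _ _ _ _ _ _ s₁ s₂ s₃ φ ψ hφ hψ hinj hsurj hexact
    refine ⟨(injective_nakMap_iff Δ ε hφ).2 fun α => ?_,
      (surjective_nakMap_iff Δ ε hψ).2 (ratHomPrecomp_injective Δ ε hψ hsurj),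
      (exact_nakMap_iff Δ ε hφ hψ).2 (exact_ratHomPrecomp Δ ε hφ hψ hexact hsurj)⟩
    obtain ⟨β, hβ, hβrat, hβφ⟩ := H M₁ M₂ s₁ s₂ φ hφ hinj α α.2.1 α.2.2
    exact ⟨⟨β, hβ, hβrat⟩, Subtype.ext hβφ⟩

theorem nakayamaPreservesFd_iff_ratPartQuasiFinite :
    NakayamaPreservesFd Δ ε ↔ RatPartQuasiFinite Δ ε := by
  constructor
  · intro H X _ _ hX sX
    exact (finite_nak_iff Δ ε sX).1 (H X sX hX)
  · intro H M _ _ s hM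
    exact (finite_nak_iff Δ ε s).2 (H M hM s)

end Main

section Coalgebra

variable {C : Type u} [AddCommGroup C] [Module k C] [Coalgebra k C]

local notation "Δ" => (Coalgebra.comul : C →ₗ[k] C ⊗[k] C)
local notation "ε" => (Coalgebra.counit : C →ₗ[k] k)

def ComodStr.regular : ComodStr Δ ε C where
  ρ := Δ
  coassoc := Coalgebra.coassoc
  counit := by
    ext c
    change TensorProduct.rid k C (LinearMap.lTensor C ε (Δ c)) = c
    rw [Coalgebra.lTensor_counit_comul, TensorProduct.rid_tmul, one_smul]

theorem conv_assoc (a b c : C →ₗ[k] k) :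
    conv Δ a (conv Δ b c) = conv Δ (conv Δ a b) c := by
  rw [conv_eq_comp_contractRight Δ a, conv_eq_comp_contractRight Δ (conv Δ a b),
    conv_eq_comp_contractRight Δ a b]
  ext x
  exact congrArg a (lAct_lAct Δ ε ComodStr.regular b c x).symm

theorem conv_counit_left (f : C →ₗ[k] k) : conv Δ ε f = f := by
  ext c
  rw [conv_apply_eq_apply_rAct]
  change f (TensorProduct.lid k C (LinearMap.rTensor C ε (Δ c))) = f c
  rw [Coalgebra.rTensor_counit_comul, TensorProduct.lid_tmul, one_smul]

theorem IsRational.conv_left {f : C →ₗ[k] k} (hf : IsRational Δ f) (g : C →ₗ[k] k) :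
    IsRational Δ (conv Δ g f) := by
  obtain ⟨x, hx⟩ := (isRational_iff Δ f).1 hf
  refine (isRational_iff Δ _).2 ⟨(contractRight g ∘ₗ Δ).lTensor _ x, fun h => ?_⟩
  rw [conv_assoc, conv_eq_comp_contractRight Δ h g, contractRight_lTensor, hx]

noncomputable def ratPartAction : ratPart Δ →ₗ[k] (C →ₗ[k] k) →ₗ[k] ratPart Δ :=
  LinearMap.mk₂ k (fun f g => ⟨conv Δ g f, f.2.conv_left g⟩)
    (fun f f' g => Subtype.ext (conv_add_right Δ g f f'))
    (fun a f g => Subtype.ext (conv_smul_right Δ a g f))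
    (fun f g g' => Subtype.ext (conv_add_left Δ g g' f))
    (fun a f g => Subtype.ext (conv_smul_left Δ a g f))

theorem ratPartAction_mem_range (f : ratPart Δ) :
    ratPartAction f ∈ LinearMap.range (contractRightHom (k := k) (M := ratPart Δ) (W := C)) := by
  obtain ⟨x, hx⟩ := (isRational_iff Δ f).1 f.2
  obtain ⟨y, rfl⟩ := mem_range_rTensor_subtype_of_forall_contractRight_mem (ratPart Δ)
    (x := x) fun h => hx h ▸ f.2.conv_left h
  refine ⟨y, LinearMap.ext fun h => Subtype.ext ?_⟩
  change ((contractRight h y : ratPart Δ) : C →ₗ[k] k) = conv Δ h f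
  rw [← hx h]
  exact (contractRight_rTensor h (ratPart Δ).subtype y).symm

noncomputable def ratPartCoaction : ratPart Δ →ₗ[k] ratPart Δ ⊗[k] C :=
  coactionOfRational (k := k) (M := ratPart Δ) (W := C) ratPartAction ratPartAction_mem_range

theorem coe_contractRight_ratPartCoaction (h : C →ₗ[k] k) (f : ratPart Δ) :
    ((contractRight h (ratPartCoaction f) : ratPart Δ) : C →ₗ[k] k) = conv Δ h f :=
  congrArg Subtype.val (contractRight_coactionOfRational _ _ h f)

noncomputable def ratPartComod : ComodStr Δ ε (ratPart Δ) :=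
  ComodStr.ofAction Δ ε ratPartCoaction
    (fun f => Subtype.ext <| by
      rw [coe_contractRight_ratPartCoaction, conv_counit_left])
    (fun a b f => Subtype.ext <| by
      rw [coe_contractRight_ratPartCoaction, coe_contractRight_ratPartCoaction,
        coe_contractRight_ratPartCoaction, conv_assoc])

theorem coe_lAct_ratPartComod (h : C →ₗ[k] k) (f : ratPart Δ) :
    ((lAct Δ ratPartComod h f : ratPart Δ) : C →ₗ[k] k) = conv Δ h f :=
  coe_contractRight_ratPartCoaction h f

theorem subtype_mem_ratHom_ratPartComod : (ratPart Δ).subtype ∈ RatHom Δ ε ratPartComod :=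
  (mem_ratHom_iff Δ ε _ _).2 fun f g => coe_lAct_ratPartComod f g

theorem nakayamaZero_iff_ratPartZero : NakayamaZero Δ ε ↔ RatPartZero Δ := by
  simp only [NakayamaZero, RatPartZero, ← subsingleton_iff_forall_eq, subsingleton_nak_iff]
  constructor
  · intro H f hf
    have := (H _ ratPartComod).elim ⟨_, subtype_mem_ratHom_ratPartComod⟩ 0
    exact LinearMap.congr_fun (congrArg Subtype.val this) ⟨f, hf⟩
  · intro H M _ _ s
    refine ⟨fun α β => Subtype.ext (LinearMap.ext fun m => ?_)⟩
    rw [H _ (α.2.2 m), H _ (β.2.2 m)]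

end Coalgebra

/-- Lemma `Nakayama-and-rat-dual`. -/
theorem nakayama_rat_dual
    (C : Type u) [AddCommGroup C] [Module k C] [Coalgebra k C] :
    (NakayamaZero (Coalgebra.comul (R := k) (A := C)) Coalgebra.counit ↔
      RatPartZero (Coalgebra.comul (R := k) (A := C))) ∧
    (NakayamaExact (Coalgebra.comul (R := k) (A := C)) Coalgebra.counit ↔
      RatPartInjective (Coalgebra.comul (R := k) (A := C)) Coalgebra.counit) ∧
    (NakayamaPreservesFd (Coalgebra.comul (R := k) (A := C)) Coalgebra.counit ↔
      RatPartQuasiFinite (Coalgebra.comul (R := k) (A := C)) Coalgebra.counit) :=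
  ⟨nakayamaZero_iff_ratPartZero, nakayamaExact_iff_ratPartInjective _ _,
    nakayamaPreservesFd_iff_ratPartQuasiFinite _ _⟩

end Stmt1
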